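/- For a lattice path ν beginning with a north step and ending with an east step, the number of ν-Dyck paths with exactly i valleys equals the number of ν-Dyck paths with exactly i high peaks. -/

import Mathlib

/-- Steps of a (Schröder) lattice path: north, east, diagonal. -/
inductive Step : Type
  | N | E | D
deriving DecidableEq, Repr

/-- Total horizontal displacement of a path. -/
def eLen (p : List Step) : ℕ := p.count Step.E + p.count Step.D

/-- Total vertical displacement of a path. -/
def nLen (p : List Step) : ℕ := p.count Step.N + p.count Step.D

/-- A lattice path uses only `N` and `E` steps. -/
def IsLatticePath (ν : List Step) : Prop := Step.D ∉ ν

/-- `colVal p x` is twice the starting height of the step of `p` crossing the vertical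
strip between abscissas `x` and `x+1`, plus `1` if that step is diagonal.  Comparing these
values columnwise is equivalent to comparing the heights of the paths over each strip. -/
def colVal : List Step → ℕ → ℕ
  | [], _ => 0
  | Step.N :: p, x => colVal p x + 2
  | Step.E :: _, 0 => 0
  | Step.E :: p, x+1 => colVal p x
  | Step.D :: _, 0 => 1
  | Step.D :: p, x+1 => colVal p x + 2

/-- `π` stays weakly above `ρ` (same endpoints intended). -/
def WeaklyAbove (π ρ : List Step) : Prop := ∀ x, colVal ρ x ≤ colVal π x

/-- Replace every peak (consecutive `NE`) of a path by a diagonal step; applied to `ν`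
this gives the path `μ` of the large ν-Schröder path definition. -/
def cutPeaks : List Step → List Step
  | [] => []
  | Step.N :: Step.E :: p => Step.D :: cutPeaks p
  | s :: p => s :: cutPeaks p

/-- A ν-Dyck path: an `N,E` path with the same endpoints as `ν` staying weakly above `ν`. -/
def IsNuDyck (ν π : List Step) : Prop :=
  Step.D ∉ π ∧ eLen π = eLen ν ∧ nLen π = nLen ν ∧ WeaklyAbove π ν

/-- A (small) ν-Schröder path: an `N,E,D` path with the same endpoints as `ν` staying weakly
above `ν` (this automatically forbids diagonal steps on the ν-diagonal). -/
def IsSmallSchroder (ν π : List Step) : Prop :=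
  eLen π = eLen ν ∧ nLen π = nLen ν ∧ WeaklyAbove π ν

/-- A large ν-Schröder path: an `N,E,D` path with the same endpoints as `ν` staying weakly
above the path obtained from `ν` by replacing each peak by a diagonal step. -/
def IsLargeSchroder (ν π : List Step) : Prop :=
  eLen π = eLen ν ∧ nLen π = nLen ν ∧ WeaklyAbove π (cutPeaks ν)

/-- Number of peaks (consecutive `NE` pairs). -/
def peaks (p : List Step) : ℕ := (p.zip p.tail).count (Step.N, Step.E)

/-- Number of valleys (consecutive `EN` pairs). -/
def valleys (p : List Step) : ℕ := (p.zip p.tail).count (Step.E, Step.N)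

/-- Lattice points at which valleys of a path occur (starting the path at `(x,y)`). -/
def valleyPts : List Step → ℕ → ℕ → List (ℕ × ℕ)
  | [], _, _ => []
  | Step.E :: p, x, y =>
      (if p.head? = some Step.N then [(x+1, y)] else []) ++ valleyPts p (x+1) y
  | Step.N :: p, x, y => valleyPts p x (y+1)
  | Step.D :: p, x, y => valleyPts p (x+1) (y+1)

/-- Lattice points at which high peaks (peaks strictly above `ν`) of a path occur. -/
def highPeakPts (ν : List Step) : List Step → ℕ → ℕ → List (ℕ × ℕ)
  | [], _, _ => []
  | Step.N :: p, x, y =>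
      (if p.head? = some Step.E ∧ colVal ν x < 2*(y+1) then [(x, y+1)] else []) ++
        highPeakPts ν p x (y+1)
  | Step.E :: p, x, y => highPeakPts ν p (x+1) y
  | Step.D :: p, x, y => highPeakPts ν p (x+1) (y+1)

/-- Number of high peaks of `π` relative to `ν`. -/
def highPeaks (ν π : List Step) : ℕ := (highPeakPts ν π 0 0).length

/-- j-th ν-Narayana number: number of ν-Dyck paths with exactly `j` valleys. -/
noncomputable def Nar (ν : List Step) (j : ℕ) : ℕ :=
  Nat.card {π : List Step // IsNuDyck ν π ∧ valleys π = j}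

/-- Number of small ν-Schröder paths with exactly `i` diagonal steps. -/
noncomputable def schNum (ν : List Step) (i : ℕ) : ℕ :=
  Nat.card {π : List Step // IsSmallSchroder ν π ∧ π.count Step.D = i}

/-- `lowH ν x` is the lowest height of a point of `ν` at abscissa `x`. -/
def lowH : List Step → ℕ → ℕ
  | _, 0 => 0
  | [], _+1 => 0
  | Step.N :: p, x+1 => lowH p (x+1) + 1
  | Step.E :: p, x+1 => lowH p x
  | Step.D :: p, x+1 => lowH p x + 1

/-- The lowest lattice path from `(0,0)` to `(b,a)` weakly above the line segment
from `(0,0)` to `(b,a)`. -/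
def nuAB (a b : ℕ) : List Step :=
  (List.range b).flatMap (fun x =>
    List.replicate (((x+1)*a + b - 1)/b - (x*a + b - 1)/b) Step.N ++ [Step.E])

/-- Number of large rational `(a,b)`-Schröder paths with `i` diagonal steps. -/
noncomputable def largeCount (a b i : ℕ) : ℕ :=
  Nat.card {π : List Step // IsLargeSchroder (nuAB a b) π ∧ π.count Step.D = i}

/-- Number of small rational `(a,b)`-Schröder paths with `i` diagonal steps. -/
noncomputable def smallCount (a b i : ℕ) : ℕ :=
  Nat.card {π : List Step // IsSmallSchroder (nuAB a b) π ∧ π.count Step.D = i}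

/-- Binomial coefficient with an integer lower entry (zero when negative). -/
def chooseZ (n : ℕ) (k : ℤ) : ℕ := if 0 ≤ k then n.choose k.toNat else 0

/-- The region weakly above `ν` in the rectangle `[0,b] × [0,a]`. -/
def InRegion (ν : List Step) (p : ℕ × ℕ) : Prop :=
  p.1 ≤ eLen ν ∧ p.2 ≤ nLen ν ∧ lowH ν p.1 ≤ p.2

/-- Two points of the region are ν-incompatible if one is strictly southwest of the other and
the rectangle they span lies in the region (equivalently its bottom-right corner does). -/
def Incompat (ν : List Step) (p q : ℕ × ℕ) : Prop :=
  ((p.1 < q.1 ∧ p.2 < q.2) ∨ (q.1 < p.1 ∧ q.2 < p.2)) ∧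
    InRegion ν (max p.1 q.1, min p.2 q.2)

/-- A ν-binary tree: a maximal set of pairwise ν-compatible points of the region. -/
def IsBinaryTree (ν : List Step) (T : Finset (ℕ × ℕ)) : Prop :=
  (∀ p ∈ T, InRegion ν p) ∧ (∀ p ∈ T, ∀ q ∈ T, ¬ Incompat ν p q) ∧
    ∀ r, InRegion ν r → (∀ p ∈ T, ¬ Incompat ν r p) → r ∈ T

/-- A ν-Schröder tree: pairwise ν-compatible points of the region containing the root
`(0,a)` and meeting every row and every column. -/
def IsSchroderTree (ν : List Step) (T : Finset (ℕ × ℕ)) : Prop :=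
  (∀ p ∈ T, InRegion ν p) ∧ (∀ p ∈ T, ∀ q ∈ T, ¬ Incompat ν p q) ∧
    (0, nLen ν) ∈ T ∧ (∀ y ≤ nLen ν, ∃ p ∈ T, p.2 = y) ∧ (∀ x ≤ eLen ν, ∃ p ∈ T, p.1 = x)

/-- One contraction step: delete a node, provided the result is still a ν-Schröder tree. -/
def ContractStep (ν : List Step) (T T' : Finset (ℕ × ℕ)) : Prop :=
  ∃ q ∈ T, T' = T.erase q ∧ IsSchroderTree ν T'

/-- `p` is a leaf of the (plane tree associated to the) node set `T`: no node strictly below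
it in its column and none strictly to its right in its row. -/
def IsLeafIn (T : Finset (ℕ × ℕ)) (p : ℕ × ℕ) : Prop :=
  (∀ q ∈ T, ¬(q.1 = p.1 ∧ q.2 < p.2)) ∧ (∀ q ∈ T, ¬(q.2 = p.2 ∧ p.1 < q.1))

/-- Starting points of vertical runs and ending points of horizontal runs of `ν`. -/
def leafPts (ν : List Step) : Finset (ℕ × ℕ) :=
  (valleyPts ν 0 0).toFinset ∪ (if ν.head? = some Step.N then {((0 : ℕ), (0 : ℕ))} else ∅) ∪
    (if ν.getLast? = some Step.E then {(eLen ν, nLen ν)} else ∅)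

/-- `horizNu ν x y`: maximal number of east steps that can be placed starting at `(x,y)`
before crossing `ν` (staying within the bounding rectangle). -/
def horizNu (ν : List Step) (x y : ℕ) : ℕ :=
  ((Finset.Icc 1 (eLen ν - x)).filter (fun k => lowH ν (x + k) ≤ y)).card

/-- No `N` step of the given path (started at `(x,y)`) has initial point with
`horizNu`-value `h`. -/
def noNAt (ν : List Step) (h : ℕ) : List Step → ℕ → ℕ → Prop
  | [], _, _ => True
  | Step.N :: p, x, y => horizNu ν x y ≠ h ∧ noNAt ν h p x (y+1)
  | Step.E :: p, x, y => noNAt ν h p (x+1) y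
  | Step.D :: p, x, y => noNAt ν h p (x+1) (y+1)

/-- Right contraction: replace a consecutive `EN` pair (a valley) by a `D` step. -/
def RightC (μ lam : List Step) : Prop :=
  ∃ p q, μ = p ++ Step.E :: Step.N :: q ∧ lam = p ++ Step.D :: q

/-- Left contraction: delete an `E` step together with the most recent preceding `N` step
whose initial point has the same `horizNu` statistic as the initial point of the `E` step,
shift the intermediate subpath, and place a `D` step at the initial point of the `N` step. -/
def LeftC (ν μ lam : List Step) : Prop :=
  ∃ p m q, μ = p ++ Step.N :: (m ++ Step.E :: q) ∧ lam = p ++ Step.D :: (m ++ q) ∧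
    horizNu ν (eLen p) (nLen p)
      = horizNu ν (eLen (p ++ Step.N :: m)) (nLen (p ++ Step.N :: m)) ∧
    noNAt ν (horizNu ν (eLen (p ++ Step.N :: m)) (nLen (p ++ Step.N :: m)))
      m (eLen p) (nLen p + 1)

/-- Diagonal contraction: delete an `E` step ending at the initial point `r` of a `D` step,
together with the most recent preceding `N` step whose initial point `s` satisfies
`horizNu s = horizNu r`, shift the intermediate subpath, and place a `D` step at `s`. -/
def DiagC (ν μ lam : List Step) : Prop :=
  ∃ p m q, μ = p ++ Step.N :: (m ++ Step.E :: Step.D :: q) ∧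
    lam = p ++ Step.D :: (m ++ Step.D :: q) ∧
    horizNu ν (eLen p) (nLen p)
      = horizNu ν (eLen (p ++ Step.N :: m) + 1) (nLen (p ++ Step.N :: m)) ∧
    noNAt ν (horizNu ν (eLen (p ++ Step.N :: m) + 1) (nLen (p ++ Step.N :: m)))
      m (eLen p) (nLen p + 1)

/-- Cover relation of the contraction poset of ν-Schröder paths. -/
def Covers (ν μ lam : List Step) : Prop :=
  IsSmallSchroder ν μ ∧ IsSmallSchroder ν lam ∧
    (RightC μ lam ∨ LeftC ν μ lam ∨ DiagC ν μ lam)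

/-- The Morse matching: `σ` (having a `D` step preceded by no valley) is matched with the
path `π` obtained by replacing the first such `D` step by `EN`. -/
def MorseM (ν : List Step) : Set (List Step × List Step) :=
  { z | ∃ p q, Step.D ∉ p ∧ valleys p = 0 ∧
      z.2 = p ++ Step.D :: q ∧ z.1 = p ++ Step.E :: Step.N :: q ∧ IsSmallSchroder ν z.2 }

/-- Twice the area between a small ν-Schröder path and `ν`. -/
def area2 (ν π : List Step) : ℕ :=
  ∑ x ∈ Finset.range (eLen ν), (colVal π x - colVal ν x)

/-- An `(I,J̄)`-forest: increasing, non-crossing arcs. -/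
def IsIJForest (I J : Finset ℕ) (F : Finset (ℕ × ℕ)) : Prop :=
  (∀ a ∈ F, a.1 ∈ I ∧ a.2 ∈ J ∧ a.1 < a.2) ∧
    (∀ a ∈ F, ∀ a' ∈ F, ¬(a.1 < a'.1 ∧ a'.1 < a.2 ∧ a.2 < a'.2))

/-- A covering `(I,J̄)`-forest: contains the arc `(1,n)` and has no isolated node. -/
def IsCoveringForest (n : ℕ) (I J : Finset ℕ) (F : Finset (ℕ × ℕ)) : Prop :=
  IsIJForest I J F ∧ (1, n) ∈ F ∧
    (∀ i ∈ I, ∃ a ∈ F, a.1 = i) ∧ (∀ j ∈ J, ∃ a ∈ F, a.2 = j)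

/-- The lattice path read off from the interleaving of `I` and `J̄` (elements `2,…,n-1`,
`E` for elements of `I`, `N` for the others). -/
def nuOf (n : ℕ) (I : Finset ℕ) : List Step :=
  (List.range' 2 (n - 2)).map (fun k => if k ∈ I then Step.E else Step.N)

/-!
A ν-Dyck path is determined by its valleys, a chain of lattice points increasing in both
coordinates and lying weakly above ν. Moving every valley one step west and one step north gives
a chain of points strictly above ν, and the lowest path turning from north to east exactly at
these points has them as its high peaks: between them it climbs only where ν forces it to, and
those corners lie on ν. This injects the ν-Dyck paths with `i` valleys into those with `i` high
peaks, for every `i`; both families of fibres partition the same finite set, so all these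
injections are bijections.
-/

instance : Fintype Step := ⟨{.N, .E, .D}, fun s => by cases s <;> simp⟩

@[simp] lemma eLen_nil : eLen [] = 0 := rfl
@[simp] lemma nLen_nil : nLen [] = 0 := rfl
@[simp] lemma eLen_cons_N (p : List Step) : eLen (.N :: p) = eLen p := by simp [eLen]
@[simp] lemma eLen_cons_E (p : List Step) : eLen (.E :: p) = eLen p + 1 := by
  simp [eLen]; omega
@[simp] lemma nLen_cons_N (p : List Step) : nLen (.N :: p) = nLen p + 1 := by
  simp [nLen]; omega
@[simp] lemma nLen_cons_E (p : List Step) : nLen (.E :: p) = nLen p := by simp [nLen]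
@[simp] lemma eLen_cons_D (p : List Step) : eLen (.D :: p) = eLen p + 1 := by
  simp [eLen]; omega
@[simp] lemma nLen_cons_D (p : List Step) : nLen (.D :: p) = nLen p + 1 := by
  simp [nLen]; omega
@[simp] lemma eLen_append (p q : List Step) : eLen (p ++ q) = eLen p + eLen q := by
  simp only [eLen, List.count_append]; omega
@[simp] lemma nLen_append (p q : List Step) : nLen (p ++ q) = nLen p + nLen q := by
  simp only [nLen, List.count_append]; omega
@[simp] lemma eLen_replicate_N (c : ℕ) : eLen (List.replicate c .N) = 0 := by
  simp [eLen, List.count_replicate]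
@[simp] lemma nLen_replicate_N (c : ℕ) : nLen (List.replicate c .N) = c := by
  simp [nLen, List.count_replicate]

lemma length_eq_nLen_add_eLen {p : List Step} (hp : Step.D ∉ p) :
    p.length = nLen p + eLen p := by
  induction p with
  | nil => rfl
  | cons s p ih =>
    rw [List.mem_cons, not_or] at hp
    cases s <;> simp_all <;> omega

lemma finite_setOf_isNuDyck (ν : List Step) : {π | IsNuDyck ν π}.Finite :=
  (List.finite_length_eq Step (nLen ν + eLen ν)).subset fun π ⟨hπ, he, hn, _⟩ => by
    simp only [Set.mem_ofPred_eq, length_eq_nLen_add_eLen hπ, he, hn]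

@[simp] lemma colVal_cons_N (p : List Step) (x : ℕ) : colVal (.N :: p) x = colVal p x + 2 := rfl
@[simp] lemma colVal_cons_E_zero (p : List Step) : colVal (.E :: p) 0 = 0 := rfl
@[simp] lemma colVal_cons_E_succ (p : List Step) (x : ℕ) :
    colVal (.E :: p) (x + 1) = colVal p x := rfl

lemma colVal_replicate_N_append (c : ℕ) (p : List Step) (x : ℕ) :
    colVal (List.replicate c .N ++ p) x = colVal p x + 2 * c := by
  induction c with
  | zero => simp
  | succ c ih => simp only [List.replicate_succ, List.cons_append, colVal_cons_N, ih]; ring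

lemma colVal_replicate_N (c x : ℕ) : colVal (List.replicate c .N) x = 2 * c := by
  simpa [colVal] using colVal_replicate_N_append c [] x

@[simp] lemma lowH_zero (p : List Step) : lowH p 0 = 0 := by
  cases p with
  | nil => rfl
  | cons s _ => cases s <;> rfl
@[simp] lemma lowH_cons_N (p : List Step) (x : ℕ) : lowH (.N :: p) (x + 1) = lowH p (x + 1) + 1 :=
  rfl
@[simp] lemma lowH_cons_E (p : List Step) (x : ℕ) : lowH (.E :: p) (x + 1) = lowH p x := rfl

lemma lowH_le_succ (ν : List Step) (x : ℕ) : lowH ν x ≤ lowH ν (x + 1) := by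
  induction ν generalizing x with
  | nil => cases x <;> rfl
  | cons s p ih =>
    cases x with
    | zero => simp
    | succ x => cases s <;> simp only [lowH] <;> grind

lemma lowH_monotone (ν : List Step) : Monotone (lowH ν) :=
  monotone_nat_of_le_succ (lowH_le_succ ν)

lemma lowH_le_nLen (ν : List Step) (x : ℕ) : lowH ν x ≤ nLen ν := by
  induction ν generalizing x with
  | nil => cases x <;> simp [lowH]
  | cons s p ih =>
    cases x with
    | zero => simp
    | succ x =>
      have := ih x
      have := ih (x + 1)
      cases s <;> simp only [lowH, nLen_cons_N, nLen_cons_E, nLen_cons_D] <;> omega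

lemma colVal_eq_two_mul_lowH {ν : List Step} (hν : IsLatticePath ν) (x : ℕ) :
    colVal ν x = 2 * lowH ν (x + 1) := by
  induction ν generalizing x with
  | nil => rfl
  | cons s p ih =>
    rw [IsLatticePath, List.mem_cons, not_or] at hν
    cases s with
    | N => simp only [colVal_cons_N, lowH_cons_N, ih hν.2]; ring
    | E => cases x <;> simp [ih hν.2]
    | D => exact absurd rfl hν.1

section Valleys

@[simp] lemma valleyPts_nil (x y : ℕ) : valleyPts [] x y = [] := rfl
@[simp] lemma valleyPts_cons_N (p : List Step) (x y : ℕ) :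
    valleyPts (.N :: p) x y = valleyPts p x (y + 1) := rfl
lemma valleyPts_cons_E (p : List Step) (x y : ℕ) :
    valleyPts (.E :: p) x y =
      (if p.head? = some .N then [(x + 1, y)] else []) ++ valleyPts p (x + 1) y := rfl
@[simp] lemma valleyPts_cons_D (p : List Step) (x y : ℕ) :
    valleyPts (.D :: p) x y = valleyPts p (x + 1) (y + 1) := rfl

lemma valleyPts_bounds {p : List Step} {x y : ℕ} {r : ℕ × ℕ} (hr : r ∈ valleyPts p x y) :
    x < r.1 ∧ r.1 ≤ x + eLen p ∧ y ≤ r.2 ∧ r.2 < y + nLen p := by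
  induction p generalizing x y with
  | nil => simp at hr
  | cons s p ih =>
    cases s with
    | N => have := ih hr; simp only [eLen_cons_N, nLen_cons_N]; omega
    | D => have := ih hr; simp only [eLen_cons_D, nLen_cons_D]; omega
    | E =>
      rw [valleyPts_cons_E, List.mem_append] at hr
      rcases hr with hr | hr
      · split_ifs at hr with h
        · obtain ⟨p, rfl⟩ := List.head?_eq_some_iff.1 h
          rw [List.mem_singleton.1 hr]
          simp only [eLen_cons_E, eLen_cons_N, nLen_cons_E, nLen_cons_N]
          omega
        · simp at hr
      · have := ih hr; simp only [eLen_cons_E, nLen_cons_E]; omega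

lemma valleyPts_pairwise (p : List Step) (x y : ℕ) :
    (valleyPts p x y).Pairwise (fun r s => r.1 < s.1 ∧ r.2 < s.2) := by
  induction p generalizing x y with
  | nil => simp
  | cons s p ih =>
    cases s with
    | N | D => exact ih _ _
    | E =>
      rw [valleyPts_cons_E]
      split_ifs with h
      · obtain ⟨p, rfl⟩ := List.head?_eq_some_iff.1 h
        refine List.pairwise_cons.2 ⟨fun r hr => ?_, ih _ _⟩
        have := valleyPts_bounds (p := p) (x := x + 1) (y := y + 1) hr
        omega
      · exact ih _ _

lemma valleys_cons (s : Step) (p : List Step) :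
    valleys (s :: p) = valleys p + if s = .E ∧ p.head? = some .N then 1 else 0 := by
  rcases p with _ | ⟨t, p⟩
  · cases s <;> rfl
  · simp only [valleys, List.tail_cons, List.zip_cons_cons, List.count_cons]
    cases s <;> cases t <;> simp

lemma valleys_eq_length_valleyPts (p : List Step) (x y : ℕ) :
    valleys p = (valleyPts p x y).length := by
  induction p generalizing x y with
  | nil => rfl
  | cons s p ih =>
    cases s with
    | N | D => simp [valleys_cons, ← ih]
    | E => by_cases h : p.head? = some .N <;> simp [valleys_cons, valleyPts_cons_E, h, ← ih]

lemma colVal_of_mem_valleyPts {p : List Step} (hp : Step.D ∉ p) {x y : ℕ} {r : ℕ × ℕ}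
    (hr : r ∈ valleyPts p x y) : colVal p (r.1 - 1 - x) = 2 * (r.2 - y) := by
  induction p generalizing x y with
  | nil => simp at hr
  | cons s p ih =>
    rw [List.mem_cons, not_or] at hp
    cases s with
    | N =>
      rw [valleyPts_cons_N] at hr
      have := valleyPts_bounds hr
      simp only [colVal_cons_N, ih hp.2 hr]
      omega
    | D => exact absurd rfl hp.1
    | E =>
      rw [valleyPts_cons_E, List.mem_append] at hr
      rcases hr with hr | hr
      · split_ifs at hr <;> simp_all
      · have := valleyPts_bounds hr
        rw [show r.1 - 1 - x = r.1 - 1 - (x + 1) + 1 by omega, colVal_cons_E_succ, ih hp.2 hr]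

lemma lowH_le_of_mem_valleyPts {ν π : List Step} (hν : IsLatticePath ν) (hπ : IsNuDyck ν π)
    {r : ℕ × ℕ} (hr : r ∈ valleyPts π 0 0) : lowH ν r.1 ≤ r.2 := by
  have hcol := colVal_of_mem_valleyPts hπ.1 hr
  have hbelow := hπ.2.2.2 (r.1 - 1)
  rw [colVal_eq_two_mul_lowH hν, Nat.sub_add_cancel (valleyPts_bounds hr).1] at hbelow
  simp only [Nat.sub_zero] at hcol
  omega

lemma head?_valleyPts_cons_E_eq_iff (p : List Step) (x y : ℕ) :
    (valleyPts (.E :: p) x y).head? = some (x + 1, y) ↔ p.head? = some .N := by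
  by_cases h : p.head? = some .N
  · simp [valleyPts_cons_E, h]
  · simp only [valleyPts_cons_E, h, if_false, List.nil_append, iff_false]
    intro hhead
    have := valleyPts_bounds (List.mem_of_mem_head? hhead)
    omega

lemma exists_head?_valleyPts_cons_E {p : List Step} (hp : Step.D ∉ p) (hn : 0 < nLen p)
    (x y : ℕ) : ∃ u, (valleyPts (.E :: p) x y).head? = some (u, y) := by
  induction p generalizing x with
  | nil => simp at hn
  | cons s p ih =>
    rw [List.mem_cons, not_or] at hp
    cases s with
    | N => exact ⟨x + 1, by simp [valleyPts_cons_E]⟩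
    | E =>
      obtain ⟨u, hu⟩ := ih hp.2 (by simpa using hn) (x + 1)
      exact ⟨u, by simpa [valleyPts_cons_E (.E :: p)] using hu⟩
    | D => exact absurd rfl hp.1

lemma head?_eq_N_iff {p : List Step} (hp : Step.D ∉ p) (x y : ℕ) :
    p.head? = some .N ↔ 0 < nLen p ∧ ∀ r ∈ (valleyPts p x y).head?, y < r.2 := by
  rcases p with _ | ⟨_ | _ | _, p⟩
  · simp
  · refine iff_of_true rfl ⟨by simp, fun r hr => ?_⟩
    rw [valleyPts_cons_N] at hr
    have := valleyPts_bounds (List.mem_of_mem_head? hr)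
    omega
  · refine iff_of_false (by simp) fun ⟨hn, hy⟩ => ?_
    obtain ⟨u, hu⟩ :=
      exists_head?_valleyPts_cons_E (List.not_mem_of_not_mem_cons hp) (by simpa using hn) x y
    simpa using hy _ hu
  · simp at hp

lemma eq_of_valleyPts_eq {p p' : List Step} (hp : Step.D ∉ p) (hp' : Step.D ∉ p')
    (he : eLen p = eLen p') (hn : nLen p = nLen p') {x y : ℕ}
    (h : valleyPts p x y = valleyPts p' x y) : p = p' := by
  induction p generalizing p' x y with
  | nil =>
    have := length_eq_nLen_add_eLen hp'
    exact (List.eq_nil_of_length_eq_zero (by simp_all)).symm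
  | cons s r ih =>
    obtain ⟨s', r', rfl⟩ : ∃ s' r', p' = s' :: r' := by
      refine List.exists_cons_of_ne_nil fun hnil => ?_
      have := length_eq_nLen_add_eLen hp
      subst hnil
      simp_all
    have hfirst : s = .N ↔ s' = .N := by
      have := head?_eq_N_iff hp x y
      rw [hn, h, ← head?_eq_N_iff hp' x y] at this
      simpa using this
    rw [List.mem_cons, not_or] at hp hp'
    obtain rfl : s = s' := by cases s <;> cases s' <;> simp_all
    congr 1
    cases s with
    | N => exact ih hp.2 hp'.2 (by simpa using he) (by simpa using hn) (by simpa using h)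
    | E =>
      have hc : r.head? = some .N ↔ r'.head? = some .N := by
        rw [← head?_valleyPts_cons_E_eq_iff r x y, h, head?_valleyPts_cons_E_eq_iff]
      refine ih hp.2 hp'.2 (by simpa using he) (by simpa using hn) (x := x + 1) (y := y) ?_
      rw [valleyPts_cons_E, valleyPts_cons_E] at h
      by_cases hr : r.head? = some .N
      · simpa [hr, hc.1 hr] using h
      · simpa [hr, (not_congr hc).1 hr] using h
    | D => exact absurd rfl hp.1

end Valleys

lemma highPeakPts_cons_N (ν p : List Step) (x y : ℕ) :
    highPeakPts ν (.N :: p) x y =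
      (if p.head? = some .E ∧ colVal ν x < 2 * (y + 1) then [(x, y + 1)] else []) ++
        highPeakPts ν p x (y + 1) := rfl
@[simp] lemma highPeakPts_cons_E (ν p : List Step) (x y : ℕ) :
    highPeakPts ν (.E :: p) x y = highPeakPts ν p (x + 1) y := rfl

lemma highPeakPts_replicate_N_append (ν : List Step) (c : ℕ) (p : List Step) (x y : ℕ) :
    highPeakPts ν (List.replicate c .N ++ p) x y =
      (if c ≠ 0 ∧ p.head? = some .E ∧ colVal ν x < 2 * (y + c) then [(x, y + c)] else []) ++
        highPeakPts ν p x (y + c) := by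
  induction c generalizing y with
  | zero => simp
  | succ c ih =>
    rw [List.replicate_succ, List.cons_append, highPeakPts_cons_N, ih, add_right_comm]
    rcases c with _ | c <;> simp [List.replicate_succ, add_assoc]

lemma highPeakPts_replicate_N (ν : List Step) (c x y : ℕ) :
    highPeakPts ν (List.replicate c .N) x y = [] := by
  simpa [highPeakPts] using highPeakPts_replicate_N_append ν c [] x y

section LowestPath

variable {ν : List Step}

variable (ν) in
/-- The lowest `N,E` path from `(x, y)` crossing `d` columns, staying weakly above `ν`. -/
def lowestPath : ℕ → ℕ → ℕ → List Step
  | _, _, 0 => []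
  | x, y, d + 1 =>
      List.replicate (max y (lowH ν (x + 1)) - y) .N ++
        .E :: lowestPath (x + 1) (max y (lowH ν (x + 1))) d

lemma lowestPath_succ (x y d : ℕ) :
    lowestPath ν x y (d + 1) = List.replicate (max y (lowH ν (x + 1)) - y) .N ++
      .E :: lowestPath ν (x + 1) (max y (lowH ν (x + 1))) d := rfl

lemma D_not_mem_lowestPath (x y d : ℕ) : Step.D ∉ lowestPath ν x y d := by
  induction d generalizing x y with
  | zero => simp [lowestPath]
  | succ d ih => simpa [lowestPath_succ] using ih _ _

@[simp] lemma eLen_lowestPath (x y d : ℕ) : eLen (lowestPath ν x y d) = d := by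
  induction d generalizing x y with
  | zero => rfl
  | succ d ih => simp [lowestPath_succ, ih]

lemma nLen_lowestPath {x y : ℕ} (hxy : lowH ν x ≤ y) (d : ℕ) :
    nLen (lowestPath ν x y d) = max y (lowH ν (x + d)) - y := by
  induction d generalizing x y with
  | zero => simp [lowestPath, hxy]
  | succ d ih =>
    have := lowH_monotone ν (show x + 1 ≤ x + (d + 1) by omega)
    simp only [lowestPath_succ, nLen_append, nLen_replicate_N, nLen_cons_E,
      ih (le_max_right _ _), show x + 1 + d = x + (d + 1) by omega]
    omega

lemma colVal_lowestPath_append {x y : ℕ} (hxy : lowH ν x ≤ y) (d : ℕ) (w : List Step)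
    (t : ℕ) :
    colVal (lowestPath ν x y d ++ w) t =
      if t < d then 2 * (max y (lowH ν (x + t + 1)) - y)
      else colVal w (t - d) + 2 * (max y (lowH ν (x + d)) - y) := by
  induction d generalizing x y t with
  | zero => simp [lowestPath, hxy]
  | succ d ih =>
    rw [lowestPath_succ, List.append_assoc, List.cons_append, colVal_replicate_N_append]
    rcases t with _ | t
    · simp
    · rw [colVal_cons_E_succ, ih (le_max_right _ _), show x + 1 + d = x + (d + 1) by omega,
        show x + 1 + t = x + (t + 1) by omega, Nat.add_sub_add_right]
      have := lowH_monotone ν (show x + 1 ≤ x + (t + 1) + 1 by omega)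
      have := lowH_monotone ν (show x + 1 ≤ x + (d + 1) by omega)
      split_ifs <;> omega

lemma highPeakPts_lowestPath_append (hν : IsLatticePath ν) {x y : ℕ} (hxy : lowH ν x ≤ y)
    (d : ℕ) (w : List Step) :
    highPeakPts ν (lowestPath ν x y d ++ w) x y =
      highPeakPts ν w (x + d) (max y (lowH ν (x + d))) := by
  induction d generalizing x y with
  | zero => simp [lowestPath, hxy]
  | succ d ih =>
    have hcol := colVal_eq_two_mul_lowH hν x
    have := lowH_monotone ν (show x + 1 ≤ x + (d + 1) by omega)
    rw [lowestPath_succ, List.append_assoc, List.cons_append, highPeakPts_replicate_N_append,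
      if_neg (by omega), List.nil_append, highPeakPts_cons_E,
      Nat.add_sub_cancel' (le_max_left _ _), ih (le_max_right _ _),
      show x + 1 + d = x + (d + 1) by omega]
    congr 1
    omega

end LowestPath

section PathWithHighPeaks

variable {ν : List Step} {H : List (ℕ × ℕ)} {x y : ℕ}

variable (ν) in
/-- `IsHighPeakList ν H x y`: the points of `H` can be the successive high peaks of a path
continuing `ν`-Dyck from `(x, y)`.  A peak at `(p, q)` is high iff `lowH ν (p + 1) < q`. -/
def IsHighPeakList : List (ℕ × ℕ) → ℕ → ℕ → Prop
  | [], x, y => x ≤ eLen ν ∧ y ≤ nLen ν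
  | (p, q) :: H, x, y => x ≤ p ∧ y < q ∧ lowH ν (p + 1) < q ∧ IsHighPeakList H (p + 1) q

lemma IsHighPeakList.le_eLen_nLen (hH : IsHighPeakList ν H x y) :
    x ≤ eLen ν ∧ y ≤ nLen ν := by
  induction H generalizing x y with
  | nil => exact hH
  | cons r H ih =>
    obtain ⟨hx, hy, -, hH⟩ := hH
    have := ih hH
    omega

lemma isHighPeakList_of_pairwise (hx : x ≤ eLen ν) (hy : y ≤ nLen ν)
    (hH : H.Pairwise fun r s => r.1 < s.1 ∧ r.2 < s.2)
    (hmem : ∀ r ∈ H,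
      x ≤ r.1 ∧ y < r.2 ∧ r.1 < eLen ν ∧ r.2 ≤ nLen ν ∧ lowH ν (r.1 + 1) < r.2) :
    IsHighPeakList ν H x y := by
  induction H generalizing x y with
  | nil => exact ⟨hx, hy⟩
  | cons r H ih =>
    rw [List.pairwise_cons] at hH
    obtain ⟨hxr, hyr, hre, hrn, hlow⟩ := hmem r List.mem_cons_self
    refine ⟨hxr, hyr, hlow, ih hre hrn hH.2 fun s hs => ?_⟩
    have := hH.1 s hs
    have := hmem s (List.mem_cons_of_mem r hs)
    omega

variable (ν) in
def pathWithHighPeaks : List (ℕ × ℕ) → ℕ → ℕ → List Step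
  | [], x, y =>
      lowestPath ν x y (eLen ν - x) ++ List.replicate (nLen ν - max y (lowH ν (eLen ν))) .N
  | (p, q) :: H, x, y =>
      lowestPath ν x y (p - x) ++
        (List.replicate (q - max y (lowH ν p)) .N ++ .E :: pathWithHighPeaks H (p + 1) q)

lemma D_not_mem_pathWithHighPeaks : Step.D ∉ pathWithHighPeaks ν H x y := by
  induction H generalizing x y with
  | nil => simp [pathWithHighPeaks, D_not_mem_lowestPath]
  | cons r H ih => simp [pathWithHighPeaks, D_not_mem_lowestPath, ih]

lemma eLen_pathWithHighPeaks (hH : IsHighPeakList ν H x y) :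
    eLen (pathWithHighPeaks ν H x y) = eLen ν - x := by
  induction H generalizing x y with
  | nil => simp [pathWithHighPeaks]
  | cons r H ih =>
    obtain ⟨hx, -, -, hH⟩ := hH
    have := hH.le_eLen_nLen
    simp only [pathWithHighPeaks, eLen_append, eLen_lowestPath, eLen_replicate_N, eLen_cons_E,
      ih hH]
    omega

lemma nLen_pathWithHighPeaks (hxy : lowH ν x ≤ y) (hH : IsHighPeakList ν H x y) :
    nLen (pathWithHighPeaks ν H x y) = nLen ν - y := by
  induction H generalizing x y with
  | nil =>
    have := lowH_le_nLen ν (eLen ν)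
    simp only [pathWithHighPeaks, nLen_append, nLen_lowestPath hxy, nLen_replicate_N,
      Nat.add_sub_cancel' hH.1]
    omega
  | cons r H ih =>
    obtain ⟨hx, hy, hlow, hH⟩ := hH
    have := hH.le_eLen_nLen
    have := lowH_le_succ ν r.1
    simp only [pathWithHighPeaks, nLen_append, nLen_lowestPath hxy, nLen_replicate_N,
      nLen_cons_E, Nat.add_sub_cancel' hx, ih hlow.le hH]
    omega

lemma colVal_le_colVal_pathWithHighPeaks (hν : IsLatticePath ν) (hxy : lowH ν x ≤ y)
    (hH : IsHighPeakList ν H x y) (t : ℕ) :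
    colVal ν (x + t) ≤ colVal (pathWithHighPeaks ν H x y) t + 2 * y := by
  rw [colVal_eq_two_mul_lowH hν]
  induction H generalizing x y t with
  | nil =>
    have := lowH_le_nLen ν (x + t + 1)
    rw [pathWithHighPeaks, colVal_lowestPath_append hxy]
    split_ifs
    · omega
    · rw [colVal_replicate_N, Nat.add_sub_cancel' hH.1]
      omega
  | cons r H ih =>
    obtain ⟨hx, hy, hlow, hH⟩ := hH
    rw [pathWithHighPeaks, colVal_lowestPath_append hxy, Nat.add_sub_cancel' hx]
    split_ifs
    · omega
    · rw [colVal_replicate_N_append]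
      cases ht : t - (r.1 - x) with
      | zero =>
        rw [colVal_cons_E_zero, show x + t = r.1 by omega]
        omega
      | succ s =>
        rw [colVal_cons_E_succ]
        have := ih hlow.le hH s
        rw [show r.1 + 1 + s = x + t by omega] at this
        omega

lemma highPeakPts_pathWithHighPeaks (hν : IsLatticePath ν) (hxy : lowH ν x ≤ y)
    (hH : IsHighPeakList ν H x y) :
    highPeakPts ν (pathWithHighPeaks ν H x y) x y = H := by
  induction H generalizing x y with
  | nil => simp [pathWithHighPeaks, highPeakPts_lowestPath_append hν hxy, highPeakPts_replicate_N]
  | cons r H ih =>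
    obtain ⟨hx, hy, hlow, hH⟩ := hH
    have := lowH_le_succ ν r.1
    have := colVal_eq_two_mul_lowH hν r.1
    rw [pathWithHighPeaks, highPeakPts_lowestPath_append hν hxy, Nat.add_sub_cancel' hx,
      highPeakPts_replicate_N_append, Nat.add_sub_cancel' (by omega),
      if_pos ⟨by omega, rfl, by omega⟩, highPeakPts_cons_E, ih hlow.le hH]
    rfl

lemma isNuDyck_pathWithHighPeaks (hν : IsLatticePath ν) (hH : IsHighPeakList ν H 0 0) :
    IsNuDyck ν (pathWithHighPeaks ν H 0 0) :=
  ⟨D_not_mem_pathWithHighPeaks, eLen_pathWithHighPeaks hH,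
    nLen_pathWithHighPeaks (lowH_zero ν).le hH, fun t => by
      simpa using colVal_le_colVal_pathWithHighPeaks hν (lowH_zero ν).le hH t⟩

end PathWithHighPeaks

section ValleysToHighPeaks

def valleyShift (r : ℕ × ℕ) : ℕ × ℕ := (r.1 - 1, r.2 + 1)

lemma valleyPts_eq_of_map_valleyShift_eq {p p' : List Step} {x y : ℕ}
    (h : (valleyPts p x y).map valleyShift = (valleyPts p' x y).map valleyShift) :
    valleyPts p x y = valleyPts p' x y := by
  have hinv (q : List Step) :
      ((valleyPts q x y).map valleyShift).map (fun r => (r.1 + 1, r.2 - 1)) = valleyPts q x y := by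
    rw [List.map_map]
    conv_rhs => rw [← List.map_id (valleyPts q x y)]
    refine List.map_congr_left fun r hr => ?_
    have := (valleyPts_bounds hr).1
    simp only [Function.comp_apply, valleyShift, id, Nat.add_sub_cancel]
    rw [Nat.sub_add_cancel (by omega)]
  rw [← hinv p, h, hinv p']

variable {ν : List Step}

lemma isHighPeakList_map_valleyShift (hν : IsLatticePath ν) {π : List Step}
    (hπ : IsNuDyck ν π) : IsHighPeakList ν ((valleyPts π 0 0).map valleyShift) 0 0 := by
  refine isHighPeakList_of_pairwise (Nat.zero_le _) (Nat.zero_le _) ?_ ?_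
  · rw [List.pairwise_map]
    refine (valleyPts_pairwise π 0 0).imp_of_mem fun hr _ hrs => ?_
    have := (valleyPts_bounds hr).1
    simp only [valleyShift]
    omega
  · simp only [List.mem_map, forall_exists_index, and_imp, forall_apply_eq_imp_iff₂]
    intro r hr
    have hb := valleyPts_bounds hr
    have hlow := lowH_le_of_mem_valleyPts hν hπ hr
    rw [hπ.2.1, hπ.2.2.1] at hb
    simp only [valleyShift, Nat.sub_add_cancel hb.1]
    omega

variable (ν) in
def toHighPeakPath (π : List Step) : List Step :=
  pathWithHighPeaks ν ((valleyPts π 0 0).map valleyShift) 0 0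

lemma isNuDyck_toHighPeakPath (hν : IsLatticePath ν) {π : List Step} (hπ : IsNuDyck ν π) :
    IsNuDyck ν (toHighPeakPath ν π) :=
  isNuDyck_pathWithHighPeaks hν (isHighPeakList_map_valleyShift hν hπ)

lemma highPeakPts_toHighPeakPath (hν : IsLatticePath ν) {π : List Step} (hπ : IsNuDyck ν π) :
    highPeakPts ν (toHighPeakPath ν π) 0 0 = (valleyPts π 0 0).map valleyShift :=
  highPeakPts_pathWithHighPeaks hν (lowH_zero ν).le (isHighPeakList_map_valleyShift hν hπ)

lemma highPeaks_toHighPeakPath (hν : IsLatticePath ν) {π : List Step} (hπ : IsNuDyck ν π) :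
    highPeaks ν (toHighPeakPath ν π) = valleys π := by
  rw [highPeaks, highPeakPts_toHighPeakPath hν hπ, List.length_map,
    valleys_eq_length_valleyPts π 0 0]

lemma injOn_toHighPeakPath (hν : IsLatticePath ν) :
    Set.InjOn (toHighPeakPath ν) {π | IsNuDyck ν π} := by
  intro π hπ π' hπ' h
  have hV : (valleyPts π 0 0).map valleyShift = (valleyPts π' 0 0).map valleyShift := by
    rw [← highPeakPts_toHighPeakPath hν hπ, h, highPeakPts_toHighPeakPath hν hπ']
  exact eq_of_valleyPts_eq hπ.1 hπ'.1 (hπ.2.1.trans hπ'.2.1.symm)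
    (hπ.2.2.1.trans hπ'.2.2.1.symm) (valleyPts_eq_of_map_valleyShift_eq hV)

end ValleysToHighPeaks

open Finset in
lemma card_fiber_eq_of_forall_card_fiber_le {α β : Type*} [DecidableEq β] (s : Finset α)
    (f g : α → β) (h : ∀ b, #{a ∈ s | f a = b} ≤ #{a ∈ s | g a = b}) (b : β) :
    #{a ∈ s | f a = b} = #{a ∈ s | g a = b} := by
  let t := insert b (s.image f ∪ s.image g)
  have hf : #s = ∑ c ∈ t, #{a ∈ s | f a = c} :=
    card_eq_sum_card_fiberwise fun a ha =>
      mem_insert_of_mem (mem_union_left _ (mem_image_of_mem f ha))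
  have hg : #s = ∑ c ∈ t, #{a ∈ s | g a = c} :=
    card_eq_sum_card_fiberwise fun a ha =>
      mem_insert_of_mem (mem_union_right _ (mem_image_of_mem g ha))
  exact (sum_eq_sum_iff_of_le fun c _ => h c).1 (hf.symm.trans hg) b (mem_insert_self _ _)

lemma Nat.card_subtype_and_eq_card_filter {α : Type*} {P Q : α → Prop} [DecidablePred Q]
    (hP : {a | P a}.Finite) : Nat.card {a // P a ∧ Q a} = (hP.toFinset.filter Q).card := by
  rw [← Nat.card_eq_finsetCard]
  exact Nat.card_congr (Equiv.subtypeEquivRight fun a => by simp)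

theorem card_valleys_eq_card_highPeaks_general (ν : List Step) (hν : IsLatticePath ν) (i : ℕ) :
    Nat.card {π : List Step // IsNuDyck ν π ∧ valleys π = i}
      = Nat.card {π : List Step // IsNuDyck ν π ∧ highPeaks ν π = i} := by
  have hfin := finite_setOf_isNuDyck ν
  rw [Nat.card_subtype_and_eq_card_filter hfin, Nat.card_subtype_and_eq_card_filter hfin]
  refine card_fiber_eq_of_forall_card_fiber_le _ _ _ (fun j => ?_) i
  refine Finset.card_le_card_of_injOn (toHighPeakPath ν) (fun π hπ => ?_)
    ((injOn_toHighPeakPath hν).mono fun π hπ => ?_)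
  · simp only [Finset.coe_filter, Set.Finite.mem_toFinset, Set.mem_ofPred_eq] at hπ ⊢
    exact ⟨isNuDyck_toHighPeakPath hν hπ.1, (highPeaks_toHighPeakPath hν hπ.1).trans hπ.2⟩
  · simp only [Finset.coe_filter, Set.Finite.mem_toFinset, Set.mem_ofPred_eq] at hπ ⊢
    exact hπ.1

/-- For a lattice path ν beginning with a north step and ending with an east
step, the number of ν-Dyck paths with exactly `i` valleys equals the number of ν-Dyck paths
with exactly `i` high peaks. -/
theorem card_valleys_eq_card_highPeaks (ν : List Step) (hν : IsLatticePath ν)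
    (hhead : ν.head? = some Step.N) (hlast : ν.getLast? = some Step.E) (i : ℕ) :
    Nat.card {π : List Step // IsNuDyck ν π ∧ valleys π = i}
      = Nat.card {π : List Step // IsNuDyck ν π ∧ highPeaks ν π = i} :=
  card_valleys_eq_card_highPeaks_general ν hν i
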